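/- arXiv:2601.02929 — 2 statements merged into one kernel-verified Lean document; each statement's English description precedes it below -/
import Mathlib

section
/- Let r ∈ [0, 1) and let P(r) = (2π)^(−3) ∫_{[0,2π]³} 𝟙[(r,0) ∈ convexHull ℝ {(cos α, sin α), (cos β, sin β), (cos γ, sin γ)}] d(α,β,γ). Then P(r) = 1/4 − (3/(2π³)) ∫₀^{2π} (Complex.arg(1 − r·exp(iθ)))² dθ. -/
/-!
Seen from `X = (r, 0)`, call a vertex of the triangle extreme when both other vertices lie
strictly to the right of the ray from `X` through it. Off a null set of degenerate configurations,
`X` misses the triangle exactly when some vertex is extreme, and then only one is; so `1 - P` is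
three times the probability that the first vertex is extreme.

Writing `1 - r e^{iθ} = ρ e^{iψ(θ)}`, the cross product of `circlePt θ - X` and `circlePt σ - X` is
`2ρ sin((σ - θ)/2) cos((σ - θ)/2 + ψ(θ))`, so the circle points to the right of the ray through
`circlePt θ` form an arc of length `π + 2ψ(θ)`. Fubini gives `P = 1 - 3 (2π)⁻³ ∫ (π + 2ψ)²`, and the
symmetry `ψ(2π - θ) = -ψ(θ)` removes the cross term.
-/

open Real
open scoped Classical

/-- The point `(cos θ, sin θ)` on the unit circle in `ℝ²`. -/
noncomputable def circlePt (θ : ℝ) : EuclideanSpace ℝ (Fin 2) := !₂[Real.cos θ, Real.sin θ]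

/-- The point `(x, y)` in `ℝ²`. -/
noncomputable def pt2 (x y : ℝ) : EuclideanSpace ℝ (Fin 2) := !₂[x, y]

/-- The cross product `(Q − P)₁·(Y − P)₂ − (Q − P)₂·(Y − P)₁` detecting on which side of the
directed line from `P` to `Q` the point `Y` lies. -/
noncomputable def cross2 (P Q Y : EuclideanSpace ℝ (Fin 2)) : ℝ :=
  (Q - P) 0 * (Y - P) 1 - (Q - P) 1 * (Y - P) 0

/-- `R(Y, →PQ)`: equals `1` if `Y` is to the right of or on the directed line from `P` to `Q`
(`cross2 P Q Y ≤ 0`), and `-1` otherwise. -/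
noncomputable def Rside (Y P Q : EuclideanSpace ℝ (Fin 2)) : ℝ :=
  if cross2 P Q Y ≤ 0 then 1 else -1

open MeasureTheory Function

theorem mem_convexHull_triple_iff {𝕜 E : Type*} [Field 𝕜] [LinearOrder 𝕜] [IsStrictOrderedRing 𝕜]
    [AddCommGroup E] [Module 𝕜 E] {x a b c : E} :
    x ∈ convexHull 𝕜 {a, b, c} ↔
      ∃ u v w : 𝕜, 0 ≤ u ∧ 0 ≤ v ∧ 0 ≤ w ∧ u + v + w = 1 ∧ u • a + v • b + w • c = x := by
  rw [← convexJoin_singleton_segment, mem_convexJoin]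
  constructor
  · rintro ⟨_, rfl, y, ⟨p, q, hp, hq, hpq, rfl⟩, m, n, hm, hn, hmn, rfl⟩
    refine ⟨m, n * p, n * q, hm, by positivity, by positivity, ?_, ?_⟩
    · linear_combination n * hpq + hmn
    · simp only [smul_add, smul_smul, add_assoc]
  · rintro ⟨u, v, w, hu, hv, hw, huvw, rfl⟩
    rcases (add_nonneg hv hw).eq_or_lt with hvw | hvw
    · obtain ⟨rfl, rfl⟩ : v = 0 ∧ w = 0 := by constructor <;> linarith
      obtain rfl : u = 1 := by linarith
      exact ⟨a, rfl, b, left_mem_segment 𝕜 b c, by simpa using left_mem_segment 𝕜 a b⟩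
    · refine ⟨a, rfl, (v / (v + w)) • b + (w / (v + w)) • c,
        ⟨_, _, by positivity, by positivity, by field_simp, rfl⟩,
        u, v + w, hu, hvw.le, by linarith, ?_⟩
      simp only [smul_add, smul_smul, mul_div_cancel₀ _ hvw.ne', add_assoc]

section Plane

variable {X A B C : EuclideanSpace ℝ (Fin 2)}

lemma cross2_swap (X A B : EuclideanSpace ℝ (Fin 2)) : cross2 X B A = -cross2 X A B := by
  simp only [cross2]; ring

lemma cross2_self (X A : EuclideanSpace ℝ (Fin 2)) : cross2 X X A = 0 := by
  simp [cross2]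

lemma cross2_add_smul {u v w : ℝ} (h : u + v + w = 1) :
    cross2 X A (u • A + v • B + w • C) = v * cross2 X A B + w * cross2 X A C := by
  simp only [cross2, PiLp.sub_apply, PiLp.add_apply, PiLp.smul_apply, smul_eq_mul]
  linear_combination (A 0 - X 0) * X 1 * h - (A 1 - X 1) * X 0 * h

lemma smul_add_smul_add_smul_cross2 (X A B C : EuclideanSpace ℝ (Fin 2)) :
    cross2 X B C • A + cross2 X C A • B + cross2 X A B • C
      = (cross2 X A B + cross2 X B C + cross2 X C A) • X := by
  ext i; fin_cases i <;> simp [cross2] <;> ring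

lemma mem_convexHull_of_cross2_pos (hAB : 0 < cross2 X A B) (hBC : 0 < cross2 X B C)
    (hCA : 0 < cross2 X C A) : X ∈ convexHull ℝ {A, B, C} := by
  set D := cross2 X A B + cross2 X B C + cross2 X C A
  have hD : 0 < D := by positivity
  refine mem_convexHull_triple_iff.2 ⟨cross2 X B C / D, cross2 X C A / D, cross2 X A B / D,
    by positivity, by positivity, by positivity, by field_simp; ring, ?_⟩
  simp only [div_eq_inv_mul, ← smul_smul, ← smul_add, smul_add_smul_add_smul_cross2]
  exact inv_smul_smul₀ hD.ne' X

lemma notMem_convexHull_of_cross2_neg (hAB : cross2 X A B < 0) (hCA : 0 < cross2 X C A) :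
    X ∉ convexHull ℝ {A, B, C} := by
  rintro h
  obtain ⟨u, v, w, -, hv, hw, huvw, hX⟩ := mem_convexHull_triple_iff.1 h
  have hAC : cross2 X A C < 0 := by rw [← neg_pos, ← cross2_swap]; exact hCA
  have hcomb := cross2_add_smul (X := X) (A := A) (B := B) (C := C) huvw
  rw [hX, cross2_swap, cross2_self, neg_zero] at hcomb
  obtain ⟨rfl, rfl⟩ : v = 0 ∧ w = 0 := by
    constructor <;> nlinarith [mul_nonneg hv hw]
  obtain rfl : u = 1 := by linarith
  simp only [one_smul, zero_smul, add_zero] at hX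
  rw [hX, cross2_self] at hAB
  exact hAB.false

lemma mem_convexHull_iff_of_cross2_ne_zero (hAB : cross2 X A B ≠ 0) (hBC : cross2 X B C ≠ 0)
    (hCA : cross2 X C A ≠ 0) :
    X ∈ convexHull ℝ {A, B, C} ↔
      (0 < cross2 X A B ↔ 0 < cross2 X B C) ∧ (0 < cross2 X B C ↔ 0 < cross2 X C A) := by
  constructor
  · intro h
    have hA := notMem_convexHull_of_cross2_neg (X := X) (A := A) (B := B) (C := C)
    have hB := notMem_convexHull_of_cross2_neg (X := X) (A := B) (B := C) (C := A)
    have hC := notMem_convexHull_of_cross2_neg (X := X) (A := C) (B := A) (C := B)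
    have hBCA : ({B, C, A} : Set (EuclideanSpace ℝ (Fin 2))) = {A, B, C} := by
      ext; simp only [Set.mem_insert_iff, Set.mem_singleton_iff]; tauto
    have hCAB : ({C, A, B} : Set (EuclideanSpace ℝ (Fin 2))) = {A, B, C} := by
      ext; simp only [Set.mem_insert_iff, Set.mem_singleton_iff]; tauto
    rw [hBCA] at hB
    rw [hCAB] at hC
    grind
  · rintro ⟨h1, h2⟩
    rcases hAB.lt_or_gt with hAB | hAB
    · have := mem_convexHull_of_cross2_pos (X := X) (A := A) (B := C) (C := B)
        (by rw [cross2_swap]; grind) (by rw [cross2_swap]; grind) (by rw [cross2_swap]; grind)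
      rwa [Set.pair_comm] at this
    · exact mem_convexHull_of_cross2_pos hAB (by grind) (by grind)

noncomputable def rightInd (X A B : EuclideanSpace ℝ (Fin 2)) : ℝ :=
  if cross2 X A B < 0 then 1 else 0

lemma rightInd_of_neg (h : cross2 X A B < 0) :
    rightInd X A B = 1 := if_pos h

lemma rightInd_of_nonneg (h : 0 ≤ cross2 X A B) :
    rightInd X A B = 0 := if_neg h.not_gt

lemma abs_rightInd_le (X A B : EuclideanSpace ℝ (Fin 2)) : |rightInd X A B| ≤ 1 := by
  unfold rightInd; split_ifs <;> simp

lemma indicator_mem_convexHull_eq (hAB : cross2 X A B ≠ 0) (hBC : cross2 X B C ≠ 0)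
    (hCA : cross2 X C A ≠ 0) :
    (if X ∈ convexHull ℝ {A, B, C} then (1 : ℝ) else 0) =
      1 - rightInd X A B * rightInd X A C - rightInd X B A * rightInd X B C
        - rightInd X C B * rightInd X C A := by
  rw [if_congr (mem_convexHull_iff_of_cross2_ne_zero hAB hBC hCA) rfl rfl]
  simp only [rightInd, cross2_swap X A B, cross2_swap X C A, cross2_swap X B C, neg_lt_zero]
  rcases hAB.lt_or_gt with h1 | h1 <;> rcases hBC.lt_or_gt with h2 | h2 <;>
    rcases hCA.lt_or_gt with h3 | h3 <;>
    simp [h1, h2, h3, h1.not_gt, h2.not_gt, h3.not_gt]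

end Plane

section IteratedIntegral

variable {α : Type*} [MeasurableSpace α] {μ : Measure α} [IsFiniteMeasure μ] {f : α → α → ℝ}

lemma integrable_of_abs_le {g : α → ℝ} (hg : Measurable g) {C : ℝ} (hgC : ∀ a, |g a| ≤ C) :
    Integrable g μ :=
  .of_bound hg.aestronglyMeasurable C (ae_of_all _ hgC)

lemma abs_integral_le_measureReal_univ {g : α → ℝ} (hg : ∀ a, |g a| ≤ 1) :
    |∫ a, g a ∂μ| ≤ μ.real Set.univ := by
  simpa using norm_integral_le_of_norm_le_const (μ := μ) (f := g) (C := 1) (ae_of_all _ hg)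

lemma integrable_prod_swap_mul (hf : Measurable (uncurry f)) (hf1 : ∀ a b, |f a b| ≤ 1)
    {g : α → ℝ} (hg : Measurable g) {C : ℝ} (hgC : ∀ a, |g a| ≤ C) :
    Integrable (uncurry fun a s => f s a * g s) (μ.prod μ) := by
  refine integrable_of_abs_le (C := C) ((hf.comp measurable_swap).mul (hg.comp measurable_snd))
    fun ⟨a, s⟩ => ?_
  simp only [uncurry_apply_pair, abs_mul]
  exact (mul_le_of_le_one_left (abs_nonneg _) (hf1 _ _)).trans (hgC _)

lemma integrable_integral_swap_mul (hf : Measurable (uncurry f)) (hf1 : ∀ a b, |f a b| ≤ 1)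
    {g : α → ℝ} (hg : Measurable g) {C : ℝ} (hgC : ∀ a, |g a| ≤ C) :
    Integrable (fun a => ∫ s, f s a * g s ∂μ) μ :=
  (integrable_prod_swap_mul hf hf1 hg hgC).integral_prod_left

lemma integral_integral_swap_mul (hf : Measurable (uncurry f)) (hf1 : ∀ a b, |f a b| ≤ 1)
    {g : α → ℝ} (hg : Measurable g) {C : ℝ} (hgC : ∀ a, |g a| ≤ C) :
    ∫ a, ∫ s, f s a * g s ∂μ ∂μ = ∫ s, g s * ∫ a, f s a ∂μ ∂μ := by
  simp_rw [integral_integral_swap (integrable_prod_swap_mul hf hf1 hg hgC), integral_mul_const,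
    mul_comm]

lemma integral_one_sub_mul_sub_mul_sub_mul (hf : Measurable (uncurry f))
    (hf1 : ∀ a b, |f a b| ≤ 1) (a b : α) :
    ∫ c, (1 - f a b * f a c - f b a * f b c - f c b * f c a) ∂μ =
      μ.real Set.univ - f a b * ∫ c, f a c ∂μ - f b a * ∫ c, f b c ∂μ
        - ∫ c, f c b * f c a ∂μ := by
  have hf_left a : Measurable (f a) := hf.comp measurable_prodMk_left
  have hf_right b : Measurable (f · b) := hf.comp measurable_prodMk_right
  have i1 := (integrable_of_abs_le (μ := μ) (hf_left a) (hf1 a)).const_mul (f a b)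
  have i2 := (integrable_of_abs_le (μ := μ) (hf_left b) (hf1 b)).const_mul (f b a)
  have i3 : Integrable (fun c => f c b * f c a) μ :=
    (integrable_of_abs_le (hf_right b) (hf1 · b)).mul_bdd (hf_right a).aestronglyMeasurable
      (ae_of_all _ (hf1 · a))
  rw [integral_sub (((integrable_const 1).sub' i1).sub' i2) i3,
    integral_sub ((integrable_const 1).sub' i1) i2, integral_sub (integrable_const 1) i1,
    integral_const, integral_const_mul, integral_const_mul, smul_eq_mul, mul_one]

theorem integral_integral_integral_eq_of_ae (hf : Measurable (uncurry f))
    (hf1 : ∀ a b, |f a b| ≤ 1) {I : α → α → α → ℝ}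
    (hI : ∀ a, ∀ᵐ b ∂μ, ∀ᵐ c ∂μ,
      I a b c = 1 - f a b * f a c - f b a * f b c - f c b * f c a) :
    ∫ a, ∫ b, ∫ c, I a b c ∂μ ∂μ ∂μ = μ.real Set.univ ^ 3 - 3 * ∫ a, (∫ b, f a b ∂μ) ^ 2 ∂μ := by
  have hf_left a : Measurable (f a) := hf.comp measurable_prodMk_left
  have hf_right b : Measurable (f · b) := hf.comp measurable_prodMk_right
  have hℓ : Measurable fun a => ∫ b, f a b ∂μ :=
    hf.stronglyMeasurable.integral_prod_right.measurable
  have hℓC a : |∫ b, f a b ∂μ| ≤ μ.real Set.univ := abs_integral_le_measureReal_univ (hf1 a)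
  have middle a : ∫ b, ∫ c, I a b c ∂μ ∂μ = μ.real Set.univ ^ 2 - (∫ b, f a b ∂μ) ^ 2
      - 2 * ∫ s, f s a * ∫ b, f s b ∂μ ∂μ := by
    have i1 := (integrable_of_abs_le (μ := μ) (hf_left a) (hf1 a)).mul_const (∫ c, f a c ∂μ)
    have i2 : Integrable (fun b => f b a * ∫ c, f b c ∂μ) μ :=
      (integrable_of_abs_le (hf_right a) (hf1 · a)).mul_bdd hℓ.aestronglyMeasurable
        (ae_of_all _ hℓC)
    have i3 := integrable_integral_swap_mul (μ := μ) hf hf1 (hf_right a) (hf1 · a)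
    rw [integral_congr_ae ((hI a).mono fun b hb =>
        (integral_congr_ae hb).trans (integral_one_sub_mul_sub_mul_sub_mul hf hf1 a b)),
      integral_sub (((integrable_const _).sub' i1).sub' i2) i3,
      integral_sub ((integrable_const _).sub' i1) i2, integral_sub (integrable_const _) i1,
      integral_const, integral_mul_const,
      integral_integral_swap_mul hf hf1 (hf_right a) (hf1 · a), smul_eq_mul]
    ring
  have j1 : Integrable (fun a => (∫ b, f a b ∂μ) ^ 2) μ :=
    integrable_of_abs_le (hℓ.pow_const 2) fun a => by
      rw [abs_pow]; exact pow_le_pow_left₀ (abs_nonneg _) (hℓC a) 2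
  have j2 := integrable_integral_swap_mul (μ := μ) hf hf1 hℓ hℓC
  rw [integral_congr_ae (ae_of_all _ middle), integral_sub ((integrable_const _).sub' j1)
    (j2.const_mul 2), integral_sub (integrable_const _) j1, integral_const, integral_const_mul,
    integral_integral_swap_mul hf hf1 hℓ hℓC, smul_eq_mul]
  simp only [← sq]
  ring

end IteratedIntegral


section Circle

variable {r : ℝ}

noncomputable def psi (r θ : ℝ) : ℝ := Complex.arg (1 - r * Complex.exp (θ * Complex.I))

lemma re_one_sub_mul_exp (r θ : ℝ) : (1 - r * Complex.exp (θ * Complex.I)).re = 1 - r * cos θ := by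
  simp [Complex.exp_mul_I, Complex.cos_ofReal_re, Complex.sin_ofReal_re]

lemma im_one_sub_mul_exp (r θ : ℝ) : (1 - r * Complex.exp (θ * Complex.I)).im = -(r * sin θ) := by
  simp [Complex.exp_mul_I, Complex.cos_ofReal_re, Complex.sin_ofReal_re]

lemma re_one_sub_mul_exp_pos (hr : r ∈ Set.Ico 0 1) (θ : ℝ) :
    0 < (1 - r * Complex.exp (θ * Complex.I)).re := by
  rw [re_one_sub_mul_exp]
  nlinarith [neg_one_le_cos θ, cos_le_one θ, hr.1, hr.2]

lemma abs_psi_lt (hr : r ∈ Set.Ico 0 1) (θ : ℝ) : |psi r θ| < π / 2 :=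
  Complex.abs_arg_lt_pi_div_two_iff.2 (.inl (re_one_sub_mul_exp_pos hr θ))

lemma continuous_psi (hr : r ∈ Set.Ico 0 1) : Continuous (psi r) :=
  continuous_iff_continuousAt.2 fun θ =>
    (Complex.continuousAt_arg (.inl (re_one_sub_mul_exp_pos hr θ))).comp
      (f := fun θ : ℝ => 1 - r * Complex.exp (θ * Complex.I)) (by fun_prop)

lemma psi_two_pi_sub (hr : r ∈ Set.Ico 0 1) (θ : ℝ) : psi r (2 * π - θ) = -psi r θ := by
  have hconj : 1 - r * Complex.exp ((2 * π - θ : ℝ) * Complex.I) =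
      (starRingEnd ℂ) (1 - r * Complex.exp (θ * Complex.I)) := by
    apply Complex.ext <;>
      simp only [Complex.conj_re, Complex.conj_im, re_one_sub_mul_exp, im_one_sub_mul_exp,
        cos_two_pi_sub, sin_two_pi_sub, mul_neg, neg_neg]
  rw [psi, hconj, Complex.arg_conj, if_neg]
  · rfl
  · refine fun h => (abs_psi_lt hr θ).not_ge ?_
    rw [psi, h, abs_of_pos pi_pos]
    linarith [pi_pos]

lemma integral_psi (hr : r ∈ Set.Ico 0 1) : ∫ θ in 0..2 * π, psi r θ = 0 := by
  have h := intervalIntegral.integral_comp_sub_left (psi r) (a := 0) (b := 2 * π) (2 * π)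
  simp only [psi_two_pi_sub hr, intervalIntegral.integral_neg, sub_self, sub_zero] at h
  linarith

lemma cross2_pt2_circlePt (r θ σ : ℝ) :
    cross2 (pt2 r 0) (circlePt θ) (circlePt σ) = (cos θ - r) * sin σ - sin θ * (cos σ - r) := by
  simp [cross2, pt2, circlePt]

lemma cross2_pt2_circlePt_eq_mul_cos (r θ σ : ℝ) :
    cross2 (pt2 r 0) (circlePt θ) (circlePt σ) = 2 * sin ((σ - θ) / 2) *
      ‖1 - r * Complex.exp (θ * Complex.I)‖ * cos ((σ - θ) / 2 + psi r θ) := by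
  have hre := Complex.norm_mul_cos_arg (1 - r * Complex.exp (θ * Complex.I))
  have him := Complex.norm_mul_sin_arg (1 - r * Complex.exp (θ * Complex.I))
  rw [re_one_sub_mul_exp] at hre
  rw [im_one_sub_mul_exp] at him
  obtain ⟨u, rfl⟩ : ∃ u, σ = θ + 2 * u := ⟨(σ - θ) / 2, by ring⟩
  rw [cross2_pt2_circlePt, psi, cos_add, show (θ + 2 * u - θ) / 2 = u by ring, sin_add, cos_add,
    sin_two_mul, cos_two_mul]
  linear_combination (-2 * sin u * cos u) * hre + (2 * sin u ^ 2) * him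
    - (2 * r * sin θ) * sin_sq_add_cos_sq u + (2 * sin u * cos u) * sin_sq_add_cos_sq θ

lemma norm_one_sub_mul_exp_pos (hr : r ∈ Set.Ico 0 1) (θ : ℝ) :
    0 < ‖1 - r * Complex.exp (θ * Complex.I)‖ :=
  norm_pos_iff.2 fun h => by simpa [h] using re_one_sub_mul_exp_pos hr θ

lemma cross2_pt2_circlePt_pos (hr : r ∈ Set.Ico 0 1) {θ σ : ℝ} (h₁ : θ < σ)
    (h₂ : σ < θ + π - 2 * psi r θ) : 0 < cross2 (pt2 r 0) (circlePt θ) (circlePt σ) := by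
  have hψ := abs_lt.1 (abs_psi_lt hr θ)
  rw [cross2_pt2_circlePt_eq_mul_cos]
  have := sin_pos_of_pos_of_lt_pi (x := (σ - θ) / 2) (by linarith) (by linarith)
  have := cos_pos_of_mem_Ioo (x := (σ - θ) / 2 + psi r θ) ⟨by linarith, by linarith⟩
  have := norm_one_sub_mul_exp_pos hr θ
  positivity

lemma cross2_pt2_circlePt_neg (hr : r ∈ Set.Ico 0 1) {θ σ : ℝ} (h₁ : θ + π - 2 * psi r θ < σ)
    (h₂ : σ < θ + 2 * π) : cross2 (pt2 r 0) (circlePt θ) (circlePt σ) < 0 := by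
  have hψ := abs_lt.1 (abs_psi_lt hr θ)
  rw [cross2_pt2_circlePt_eq_mul_cos]
  have := sin_pos_of_pos_of_lt_pi (x := (σ - θ) / 2) (by linarith) (by linarith)
  have := cos_neg_of_pi_div_two_lt_of_lt (x := (σ - θ) / 2 + psi r θ) (by linarith)
    (by linarith)
  have := norm_one_sub_mul_exp_pos hr θ
  exact mul_neg_of_pos_of_neg (by positivity) ‹_›

lemma countable_setOf_cross2_pt2_circlePt_eq_zero (hr : r ∈ Set.Ico 0 1) (θ : ℝ) :
    {σ | cross2 (pt2 r 0) (circlePt θ) (circlePt σ) = 0}.Countable := by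
  refine ((Set.countable_range fun n : ℤ => θ + 2 * n * π).union
    (Set.countable_range fun n : ℤ => θ + (2 * n + 1) * π - 2 * psi r θ)).mono
    fun σ (hσ : cross2 (pt2 r 0) (circlePt θ) (circlePt σ) = 0) => ?_
  rw [cross2_pt2_circlePt_eq_mul_cos, mul_eq_zero, mul_eq_zero, mul_eq_zero] at hσ
  rcases hσ with ((h | h) | h) | h
  · norm_num at h
  · obtain ⟨n, hn⟩ := sin_eq_zero_iff.1 h
    exact .inl ⟨n, by linarith⟩
  · exact absurd h (norm_one_sub_mul_exp_pos hr θ).ne'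
  · obtain ⟨n, hn⟩ := cos_eq_zero_iff.1 h
    exact .inr ⟨n, by linarith⟩

lemma circlePt_add_two_pi (θ : ℝ) : circlePt (θ + 2 * π) = circlePt θ := by
  simp [circlePt]

lemma measurable_rightInd_circlePt (r : ℝ) :
    Measurable (uncurry fun θ σ => rightInd (pt2 r 0) (circlePt θ) (circlePt σ)) := by
  refine Measurable.ite (isOpen_lt ?_ continuous_const).measurableSet measurable_const
    measurable_const
  simp only [cross2_pt2_circlePt]
  fun_prop

lemma intervalIntegrable_rightInd_circlePt (r θ a b : ℝ) :
    IntervalIntegrable (fun σ => rightInd (pt2 r 0) (circlePt θ) (circlePt σ)) volume a b :=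
  intervalIntegrable_const.mono_fun'
    ((measurable_rightInd_circlePt r).comp measurable_prodMk_left).aestronglyMeasurable
    (ae_of_all _ fun _ => abs_rightInd_le _ _ _)

lemma integral_rightInd_circlePt (hr : r ∈ Set.Ico 0 1) (θ : ℝ) :
    ∫ σ in 0..2 * π, rightInd (pt2 r 0) (circlePt θ) (circlePt σ) = π + 2 * psi r θ := by
  have hψ := abs_lt.1 (abs_psi_lt hr θ)
  set m := θ + π - 2 * psi r θ
  have hperiodic : Periodic (fun σ => rightInd (pt2 r 0) (circlePt θ) (circlePt σ)) (2 * π) :=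
    fun σ => by simp only [circlePt_add_two_pi]
  have hshift := hperiodic.intervalIntegral_add_eq θ 0
  rw [zero_add] at hshift
  rw [← hshift,
    ← intervalIntegral.integral_add_adjacent_intervals (b := m)
      (intervalIntegrable_rightInd_circlePt r θ _ _) (intervalIntegrable_rightInd_circlePt r θ _ _),
    intervalIntegral.integral_congr_Ioo_of_le (g := fun _ => 0) (by linarith)
      fun σ hσ => rightInd_of_nonneg (cross2_pt2_circlePt_pos hr hσ.1 hσ.2).le,
    intervalIntegral.integral_congr_Ioo_of_le (g := fun _ => 1) (by linarith)
      fun σ hσ => rightInd_of_neg (cross2_pt2_circlePt_neg hr hσ.1 hσ.2)]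
  simp only [intervalIntegral.integral_zero, intervalIntegral.integral_const, smul_eq_mul, mul_one]
  ring

lemma integral_sq_pi_add_two_mul_psi (hr : r ∈ Set.Ico 0 1) :
    ∫ θ in 0..2 * π, (π + 2 * psi r θ) ^ 2 = 2 * π ^ 3 + 4 * ∫ θ in 0..2 * π, psi r θ ^ 2 := by
  have hψ := (continuous_psi hr).intervalIntegrable (μ := volume) 0 (2 * π)
  have hψ2 : IntervalIntegrable (fun θ => psi r θ ^ 2) volume 0 (2 * π) :=
    ((continuous_psi hr).pow 2).intervalIntegrable 0 (2 * π)
  have hexpand θ : (π + 2 * psi r θ) ^ 2 = (π ^ 2 + 4 * π * psi r θ) + 4 * psi r θ ^ 2 := by ring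
  simp only [hexpand]
  rw [intervalIntegral.integral_add (intervalIntegrable_const.add (hψ.const_mul _))
      (hψ2.const_mul _), intervalIntegral.integral_add intervalIntegrable_const (hψ.const_mul _),
    intervalIntegral.integral_const_mul, intervalIntegral.integral_const_mul, integral_psi hr,
    intervalIntegral.integral_const, smul_eq_mul]
  ring

end Circle

theorem prob_eq_quarter_sub_arg_sq_integral (r : ℝ) (hr : r ∈ Set.Ico (0:ℝ) 1) :
    (2*π)⁻¹^3 * (∫ α in (0:ℝ)..(2*π), ∫ β in (0:ℝ)..(2*π), ∫ γ in (0:ℝ)..(2*π),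
      if pt2 r 0 ∈ convexHull ℝ {circlePt α, circlePt β, circlePt γ} then (1:ℝ) else 0)
    = 1/4 - 3/(2*π^3) * ∫ θ in (0:ℝ)..(2*π),
        (Complex.arg (1 - (r:ℂ) * Complex.exp (θ * Complex.I)))^2 := by
  have h2π : (0 : ℝ) ≤ 2 * π := by positivity
  simp only [intervalIntegral.integral_of_le h2π]
  rw [integral_integral_integral_eq_of_ae (measurable_rightInd_circlePt r)
    (fun _ _ => abs_rightInd_le _ _ _) ?_]
  · simp only [← intervalIntegral.integral_of_le h2π, integral_rightInd_circlePt hr,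
      integral_sq_pi_add_two_mul_psi hr, measureReal_restrict_apply_univ,
      volume_real_Ioc_of_le h2π]
    change _ = 1 / 4 - 3 / (2 * π ^ 3) * ∫ θ in 0..2 * π, psi r θ ^ 2
    field_simp
    ring
  · intro α
    filter_upwards [(countable_setOf_cross2_pt2_circlePt_eq_zero hr α).ae_notMem _] with β hαβ
    filter_upwards [(countable_setOf_cross2_pt2_circlePt_eq_zero hr α).ae_notMem _,
      (countable_setOf_cross2_pt2_circlePt_eq_zero hr β).ae_notMem _] with γ hαγ hβγ
    exact indicator_mem_convexHull_eq hαβ hβγ (by rwa [cross2_swap, neg_ne_zero])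
end

section
/- For every r ∈ (0, 1), the circle integral over the unit circle ∮_{|z|=1} ((z² − 1)/((1 − r·z)·(z − r)·z)) · Complex.log(1 − r·z) dz = −2πi · Real.log(1 − r²) / r. (By the residue theorem: the residue at z = 0 vanishes since log 1 = 0, and the residue at z = r equals −log(1 − r²)/r.) -/
/-!
Partial fractions split the rational factor as
`c⁻¹ (z⁻¹ - (z - c)⁻¹) + (1 - c z)⁻¹`. Since `1 - c z` stays in the slit plane on the closed unit
disc, `log (1 - c z)` and `(1 - c z)⁻¹ log (1 - c z)` are holomorphic there. Cauchy's integral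
formula evaluates the first two pieces to `2πi c⁻¹ log 1 = 0` and `-2πi c⁻¹ log (1 - c²)`, and
Cauchy–Goursat kills the third.
-/

open scoped Real
open Complex Metric

theorem sq_sub_one_div_eq_inv_sub_inv_add_inv {K : Type*} [Field K] {c z : K} (hc : c ≠ 0)
    (hz : z ≠ 0) (hzc : z - c ≠ 0) (hcz : 1 - c * z ≠ 0) :
    (z ^ 2 - 1) / ((1 - c * z) * (z - c) * z) = c⁻¹ * (z⁻¹ - (z - c)⁻¹) + (1 - c * z)⁻¹ := by
  have hzc' : 1 - z * c ≠ 0 := by rwa [mul_comm]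
  field_simp
  ring

section CircleIntegral

variable {E : Type*} [NormedAddCommGroup E] [NormedSpace ℂ E] {f : ℂ → E} {c w : ℂ} {R : ℝ}

theorem DifferentiableOn.circleIntegrable (hR : 0 ≤ R)
    (hf : DifferentiableOn ℂ f (closedBall c R)) : CircleIntegrable f c R :=
  (hf.continuousOn.mono sphere_subset_closedBall).circleIntegrable hR

theorem DifferentiableOn.circleIntegrable_sub_inv_smul
    (hf : DifferentiableOn ℂ f (closedBall c R)) (hw : w ∈ ball c R) :
    CircleIntegrable (fun z => (z - w)⁻¹ • f z) c R := by
  have hR : 0 ≤ R := nonempty_ball.mp ⟨w, hw⟩ |>.le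
  have hw' : w ∉ sphere c |R| := by
    rw [abs_of_nonneg hR]
    exact fun h => (ne_of_lt (mem_ball.mp hw)) (mem_sphere.mp h)
  exact (circleIntegrable_sub_inv_iff.mpr (Or.inr hw')).smul_continuousOn
    (by simpa [abs_of_nonneg hR] using hf.continuousOn.mono sphere_subset_closedBall)

theorem DifferentiableOn.circleIntegral_eq_zero (hR : 0 ≤ R)
    (hf : DifferentiableOn ℂ f (closedBall c R)) : ∮ z in C(c, R), f z = 0 :=
  (hf.mono closure_ball_subset_closedBall).diffContOnCl.circleIntegral_eq_zero hR

end CircleIntegral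

section LogOneSubMul

variable {c : ℂ}

theorem one_sub_mul_mem_slitPlane (hc : ‖c‖ < 1) {z : ℂ} (hz : ‖z‖ ≤ 1) :
    1 - c * z ∈ slitPlane := by
  rw [sub_eq_add_neg]
  refine mem_slitPlane_of_norm_lt_one ?_
  calc ‖-(c * z)‖ = ‖c‖ * ‖z‖ := by rw [norm_neg, norm_mul]
    _ ≤ ‖c‖ := mul_le_of_le_one_right (norm_nonneg c) hz
    _ < 1 := hc

theorem differentiableOn_log_one_sub_mul (hc : ‖c‖ < 1) :
    DifferentiableOn ℂ (fun z => log (1 - c * z)) (closedBall 0 1) :=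
  (by fun_prop : DifferentiableOn ℂ (fun z => 1 - c * z) _).clog fun z hz =>
    one_sub_mul_mem_slitPlane hc (mem_closedBall_zero_iff.mp hz)

theorem differentiableOn_inv_one_sub_mul_mul_log (hc : ‖c‖ < 1) :
    DifferentiableOn ℂ (fun z => (1 - c * z)⁻¹ * log (1 - c * z)) (closedBall 0 1) :=
  ((by fun_prop : DifferentiableOn ℂ (fun z => 1 - c * z) _).inv fun z hz =>
    slitPlane_ne_zero (one_sub_mul_mem_slitPlane hc (mem_closedBall_zero_iff.mp hz))).mul
    (differentiableOn_log_one_sub_mul hc)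

theorem circleIntegral_sq_sub_one_div_mul_log_one_sub_mul (hc : ‖c‖ < 1) (hc0 : c ≠ 0) :
    (∮ z in C(0, 1), ((z ^ 2 - 1) / ((1 - c * z) * (z - c) * z)) * log (1 - c * z))
      = -2 * π * I * log (1 - c ^ 2) / c := by
  have hL := differentiableOn_log_one_sub_mul hc
  have hM := differentiableOn_inv_one_sub_mul_mul_log hc
  have h0 : (0 : ℂ) ∈ ball 0 1 := mem_ball_self one_pos
  have hc1 : c ∈ ball 0 1 := mem_ball_zero_iff.mpr hc
  have hi0 := (hL.circleIntegrable_sub_inv_smul h0).const_fun_smul (a := c⁻¹)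
  have hic := (hL.circleIntegrable_sub_inv_smul hc1).const_fun_smul (a := c⁻¹)
  have hsplit : Set.EqOn (fun z => ((z ^ 2 - 1) / ((1 - c * z) * (z - c) * z)) * log (1 - c * z))
      (fun z => (c⁻¹ • ((z - 0)⁻¹ • log (1 - c * z)) - c⁻¹ • ((z - c)⁻¹ • log (1 - c * z)))
        + (1 - c * z)⁻¹ * log (1 - c * z))
      (sphere 0 1) := by
    intro z hz
    have hz1 : ‖z‖ = 1 := mem_sphere_zero_iff_norm.mp hz
    have hz0 : z ≠ 0 := norm_ne_zero_iff.mp (by rw [hz1]; exact one_ne_zero)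
    have hzc : z - c ≠ 0 := sub_ne_zero.mpr fun h => hc.ne (h ▸ hz1)
    have hcz := slitPlane_ne_zero (one_sub_mul_mem_slitPlane hc hz1.le)
    simp only [sq_sub_one_div_eq_inv_sub_inv_add_inv hc0 hz0 hzc hcz, smul_eq_mul, sub_zero]
    ring
  rw [circleIntegral.integral_congr zero_le_one hsplit,
    circleIntegral.integral_add (hi0.fun_sub hic) (hM.circleIntegrable zero_le_one),
    circleIntegral.integral_sub hi0 hic, circleIntegral.integral_smul,
    circleIntegral.integral_smul, hL.circleIntegral_sub_inv_smul h0,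
    hL.circleIntegral_sub_inv_smul hc1, hM.circleIntegral_eq_zero zero_le_one]
  simp only [mul_zero, sub_zero, log_one, smul_eq_mul]
  field_simp
  ring

end LogOneSubMul

theorem circleIntegral_log_eq (r : ℝ) (hr : r ∈ Set.Ioo (0:ℝ) 1) :
    (∮ z in C(0, 1), ((z^2 - 1)/((1 - (r:ℂ)*z)*(z - (r:ℂ))*z)) * Complex.log (1 - (r:ℂ)*z))
      = -2*π*Complex.I * Real.log (1 - r^2) / r := by
  obtain ⟨hr0, hr1⟩ := hr
  have hnorm : ‖(r : ℂ)‖ < 1 := by rwa [norm_real, Real.norm_of_nonneg hr0.le]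
  rw [circleIntegral_sq_sub_one_div_mul_log_one_sub_mul hnorm (ofReal_ne_zero.mpr hr0.ne'),
    ofReal_log (by nlinarith), ofReal_sub, ofReal_one, ofReal_pow]
end
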